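/- The tensor and par operations are De Morgan dual under the dual operation: for opponent games O, O', dual(O ⊗ O') = dual(O) ⅋ dual(O'), and similarly dual(O ⊗ʳ P) = dual(O) ⅋ˡ dual(P) and dual(P ⊗ˡ O) = dual(P) ⅋ʳ dual(O). -/

import Mathlib

/-- Rose trees: the unlabeled shape of a game tree. -/
inductive RTree : Type where
  | node : List RTree → RTree

mutual
/-- An opponent game: a finite list of player games (its children). -/
inductive OGame : Type where
  | mk : List PGame → OGame
/-- A player game: a finite list of opponent games (its children). -/
inductive PGame : Type where
  | mk : List OGame → PGame
end

mutual
/-- The dual of an opponent game. -/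
def OGame.dual : OGame → PGame
  | .mk ps => .mk (ps.attach.map fun ⟨p, _⟩ => p.dual)
/-- The dual of a player game. -/
def PGame.dual : PGame → OGame
  | .mk os => .mk (os.attach.map fun ⟨o, _⟩ => o.dual)
end

mutual
/-- Strategy existence in an opponent game: a conjunction over children. -/
def OGame.strat : OGame → Bool
  | .mk ps => ps.attach.all fun ⟨p, _⟩ => p.strat
/-- Strategy existence in a player game: a disjunction over children. -/
def PGame.strat : PGame → Bool
  | .mk os => os.attach.any fun ⟨o, _⟩ => o.strat
end

mutual
/-- Tensor of opponent games: `O ⊗ O' = (P_i ⊗ˡ O', O ⊗ʳ P'_k | …)`. -/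
def otimes : OGame → OGame → OGame
  | .mk ps, .mk qs => .mk ((ps.attach.map fun ⟨p, _⟩ => oxl p (.mk qs)) ++
      (qs.attach.map fun ⟨q, _⟩ => oxr (.mk ps) q))
  termination_by o o' => sizeOf o + sizeOf o'
  decreasing_by
  · have := List.sizeOf_lt_of_mem ‹p ∈ ps›; simp_all; omega
  · have := List.sizeOf_lt_of_mem ‹q ∈ qs›; simp_all; omega
/-- Mixed tensor `O ⊗ʳ P = {O ⊗ O_j | j ∈ J}`. -/
def oxr : OGame → PGame → PGame
  | o, .mk os => .mk (os.attach.map fun ⟨oj, _⟩ => otimes o oj)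
  termination_by o p => sizeOf o + sizeOf p
  decreasing_by
  · have := List.sizeOf_lt_of_mem ‹oj ∈ os›; simp_all; omega
/-- Mixed tensor `P ⊗ˡ O = {O_j ⊗ O | j ∈ J}`. -/
def oxl : PGame → OGame → PGame
  | .mk os, o => .mk (os.attach.map fun ⟨oj, _⟩ => otimes oj o)
  termination_by p o => sizeOf p + sizeOf o
  decreasing_by
  · have := List.sizeOf_lt_of_mem ‹oj ∈ os›; simp_all; omega
end

mutual
/-- Par of player games: `P ⅋ P' = {O_j ⅋ˡ P', P ⅋ʳ O'_k | …}`. -/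
def parr : PGame → PGame → PGame
  | .mk os, .mk qs => .mk ((os.attach.map fun ⟨o, _⟩ => parrOP o (.mk qs)) ++
      (qs.attach.map fun ⟨q, _⟩ => parrPO (.mk os) q))
  termination_by p p' => sizeOf p + sizeOf p'
  decreasing_by
  · have := List.sizeOf_lt_of_mem ‹o ∈ os›; simp_all; omega
  · have := List.sizeOf_lt_of_mem ‹q ∈ qs›; simp_all; omega
/-- Mixed par `P ⅋ʳ O = (P ⅋ P_i | i ∈ I)`. -/
def parrPO : PGame → OGame → OGame
  | p, .mk ps => .mk (ps.attach.map fun ⟨pi, _⟩ => parr p pi)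
  termination_by p o => sizeOf p + sizeOf o
  decreasing_by
  · have := List.sizeOf_lt_of_mem ‹pi ∈ ps›; simp_all; omega
/-- Mixed par `O ⅋ˡ P = (P_i ⅋ P | i ∈ I)`. -/
def parrOP : OGame → PGame → OGame
  | .mk ps, p => .mk (ps.attach.map fun ⟨pi, _⟩ => parr pi p)
  termination_by o p => sizeOf o + sizeOf p
  decreasing_by
  · have := List.sizeOf_lt_of_mem ‹pi ∈ ps›; simp_all; omega
end

mutual
/-- The exponential `!O`: `!() = ()` and `!O = ⊗_{i∈I} (b_i : !'P_i)` for `I ≠ ∅`. -/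
def bang : OGame → OGame
  | .mk [] => .mk []
  | .mk (p :: ps) =>
      (ps.attach.map fun ⟨q, _⟩ => OGame.mk [bang' q]).foldl otimes (OGame.mk [bang' p])
/-- The auxiliary exponential `!'{a_j : O_j} = {a_j : !O_j}`. -/
def bang' : PGame → PGame
  | .mk os => .mk (os.attach.map fun ⟨o, _⟩ => bang o)
end

mutual
/-- Underlying unlabeled tree of an opponent game. -/
def OGame.toTree : OGame → RTree
  | .mk ps => .node (ps.attach.map fun ⟨p, _⟩ => p.toTree)
/-- Underlying unlabeled tree of a player game. -/
def PGame.toTree : PGame → RTree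
  | .mk os => .node (os.attach.map fun ⟨o, _⟩ => o.toTree)
end

/-- Number of nodes (including the root). -/
def RTree.nodes : RTree → ℕ
  | .node cs => 1 + (cs.attach.map fun ⟨c, _⟩ => c.nodes).sum

/-- Number of parent-child edges. -/
def RTree.edges : RTree → ℕ
  | .node cs => cs.length + (cs.attach.map fun ⟨c, _⟩ => c.edges).sum

/-- Number of leaves. -/
def RTree.leaves : RTree → ℕ
  | .node [] => 1
  | .node cs => (cs.attach.map fun ⟨c, _⟩ => c.leaves).sum

/-- Uniform size: `u[leaf] = 0`, `u[node with n children] = (n-1) + Σ u[child]`. -/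
def RTree.usize : RTree → ℕ
  | .node [] => 0
  | .node cs => (cs.length - 1) + (cs.attach.map fun ⟨c, _⟩ => c.usize).sum

/-- Depth: leaves have depth 0. -/
def RTree.depth : RTree → ℕ
  | .node cs => (cs.attach.map fun ⟨c, _⟩ => c.depth + 1).foldr max 0

/-- `profile t k` is the number of nodes of `t` at depth `k`. -/
def RTree.profile : RTree → ℕ → ℕ
  | _, 0 => 1
  | .node cs, k + 1 => (cs.attach.map fun ⟨c, _⟩ => c.profile k).sum

mutual
/-- Number of player nodes of an opponent game. -/
def OGame.pnodes : OGame → ℕ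
  | .mk ps => (ps.attach.map fun ⟨p, _⟩ => p.pnodes).sum
/-- Number of player nodes of a player game (the root counts). -/
def PGame.pnodes : PGame → ℕ
  | .mk os => 1 + (os.attach.map fun ⟨o, _⟩ => o.pnodes).sum
end

mutual
/-- Number of edges leaving opponent nodes, for an opponent game. -/
def OGame.eo : OGame → ℕ
  | .mk ps => ps.length + (ps.attach.map fun ⟨p, _⟩ => p.eo).sum
/-- Number of edges leaving opponent nodes, for a player game. -/
def PGame.eo : PGame → ℕ
  | .mk os => (os.attach.map fun ⟨o, _⟩ => o.eo).sum
end

mutual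
/-- Number of edges leaving player nodes, for an opponent game. -/
def OGame.ep : OGame → ℕ
  | .mk ps => (ps.attach.map fun ⟨p, _⟩ => p.ep).sum
/-- Number of edges leaving player nodes, for a player game. -/
def PGame.ep : PGame → ℕ
  | .mk os => os.length + (os.attach.map fun ⟨o, _⟩ => o.ep).sum
end

/-- `γ(i,j) = 1` if `i` or `j` is zero or even, else `0`. -/
def gammaCoef (i j : ℕ) : ℕ :=
  if i = 0 ∨ j = 0 ∨ i % 2 = 0 ∨ j % 2 = 0 then 1 else 0

mutual
/-- The single-branch player chain `L_n`. -/
def Lp : ℕ → PGame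
  | 0 => .mk []
  | n + 1 => .mk [Lo n]
/-- The single-branch opponent chain `L'_n`. -/
def Lo : ℕ → OGame
  | 0 => .mk []
  | n + 1 => .mk [Lp n]
end

theorem OGame.dual_mk (ps : List PGame) : (OGame.mk ps).dual = .mk (ps.map PGame.dual) := by
  rw [OGame.dual]; simp

theorem PGame.dual_mk (os : List OGame) : (PGame.mk os).dual = .mk (os.map OGame.dual) := by
  rw [PGame.dual]; simp

theorem otimes_mk_mk (ps qs : List PGame) :
    otimes (.mk ps) (.mk qs) = .mk (ps.map (oxl · (.mk qs)) ++ qs.map (oxr (.mk ps))) := by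
  rw [otimes]; simp

theorem oxr_mk (O : OGame) (os : List OGame) : oxr O (.mk os) = .mk (os.map (otimes O)) := by
  rw [oxr]; simp

theorem oxl_mk (os : List OGame) (O : OGame) : oxl (.mk os) O = .mk (os.map (otimes · O)) := by
  rw [oxl]; simp

theorem parr_mk_mk (os qs : List OGame) :
    parr (.mk os) (.mk qs) = .mk (os.map (parrOP · (.mk qs)) ++ qs.map (parrPO (.mk os))) := by
  rw [parr]; simp

theorem parrPO_mk (P : PGame) (ps : List PGame) : parrPO P (.mk ps) = .mk (ps.map (parr P)) := by
  rw [parrPO]; simp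

theorem parrOP_mk (ps : List PGame) (P : PGame) : parrOP (.mk ps) P = .mk (ps.map (parr · P)) := by
  rw [parrOP]; simp

mutual
theorem dual_otimes : ∀ O O' : OGame, (otimes O O').dual = parr O.dual O'.dual
  | .mk ps, .mk qs => by
    simp only [otimes_mk_mk, OGame.dual_mk, parr_mk_mk, List.map_append, List.map_map]
    congr 2
    · exact List.map_congr_left fun p hp => by
        rw [Function.comp_apply, dual_oxl p (.mk qs), OGame.dual_mk]; rfl
    · exact List.map_congr_left fun q hq => by
        rw [Function.comp_apply, dual_oxr (.mk ps) q, OGame.dual_mk]; rfl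
  termination_by O O' => sizeOf O + sizeOf O'
  decreasing_by
  · have := List.sizeOf_lt_of_mem hp; simp_all; omega
  · have := List.sizeOf_lt_of_mem hq; simp_all; omega

theorem dual_oxr : ∀ (O : OGame) (P : PGame), (oxr O P).dual = parrPO O.dual P.dual
  | O, .mk os => by
    simp only [oxr_mk, PGame.dual_mk, parrPO_mk, List.map_map]
    exact congrArg _ (List.map_congr_left fun o ho => dual_otimes O o)
  termination_by O P => sizeOf O + sizeOf P
  decreasing_by have := List.sizeOf_lt_of_mem ho; simp_all; omega

theorem dual_oxl : ∀ (P : PGame) (O : OGame), (oxl P O).dual = parrOP P.dual O.dual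
  | .mk os, O => by
    simp only [oxl_mk, PGame.dual_mk, parrOP_mk, List.map_map]
    exact congrArg _ (List.map_congr_left fun o ho => dual_otimes o O)
  termination_by P O => sizeOf P + sizeOf O
  decreasing_by have := List.sizeOf_lt_of_mem ho; simp_all; omega
end

/-- tensor and par are De Morgan dual under `dual`. -/
theorem dual_otimes_parr :
    (∀ O O' : OGame, (otimes O O').dual = parr O.dual O'.dual) ∧
    (∀ (O : OGame) (P : PGame), (oxr O P).dual = parrPO O.dual P.dual) ∧
    (∀ (P : PGame) (O : OGame), (oxl P O).dual = parrOP P.dual O.dual) :=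
  ⟨dual_otimes, dual_oxr, dual_oxl⟩
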